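/- For every t > 0, η(t) ≤ √(2/π) ∫_{t/2}^∞ exp(−z²/2) dz. -/

import Mathlib

/-!
Write `φ` for the standard normal density, so that `η(t) = ∫ φ(z) σ(tz - t²/2) dz` with `σ` the
logistic sigmoid. Bound `σ` by `1` on `z > t/2` and by `exp` on `z ≤ t/2`; exponential tilting turns
`φ(z) exp(tz - t²/2)` into `φ(z - t)`, whose mass on `(-∞, t/2]` equals, by symmetry of `φ`, the mass
of `φ` on `(t/2, ∞)`. Hence `η(t) ≤ 2 P(Z > t/2)`.
-/

open MeasureTheory ProbabilityTheory Real Set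

/-- `η(t) = E_{z∼N(0,1)} [1 / (1 + exp(t²/2 − t z))]`. -/
noncomputable def eta (t : ℝ) : ℝ :=
  ∫ z, (1 + Real.exp (t ^ 2 / 2 - t * z))⁻¹ ∂ gaussianReal 0 1

lemma sigmoid_le_exp (x : ℝ) : sigmoid x ≤ exp x := by
  rw [sigmoid_def, ← inv_inv (exp x), ← exp_neg]
  exact inv_anti₀ (exp_pos _) (le_add_of_nonneg_left zero_le_one)

lemma gaussianPDFReal_zero_neg (v : NNReal) (x : ℝ) :
    gaussianPDFReal 0 v (-x) = gaussianPDFReal 0 v x := by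
  simp [gaussianPDFReal]

lemma gaussianPDFReal_mul_exp (μ : ℝ) {v : NNReal} (hv : v ≠ 0) (t x : ℝ) :
    gaussianPDFReal μ v x * exp (t * (x - μ) - v * t ^ 2 / 2) =
      gaussianPDFReal (μ + v * t) v x := by
  have hv' : (v : ℝ) ≠ 0 := by exact_mod_cast hv
  simp only [gaussianPDFReal, mul_assoc, ← exp_add]
  congr 2
  field_simp
  ring

section Translation

variable {E : Type*} [NormedAddCommGroup E] [NormedSpace ℝ E]

lemma setIntegral_Iic_comp_sub_right (φ : ℝ → E) (a t : ℝ) :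
    ∫ z in Iic a, φ (z - t) = ∫ z in Iic (a - t), φ z := by
  rw [← (measurePreserving_sub_right volume t).setIntegral_preimage_emb
    (MeasurableEquiv.subRight t).measurableEmbedding φ (Iic (a - t))]
  congr
  ext z
  simp

lemma setIntegral_Iic_comp_sub_eq_setIntegral_Ioi {φ : ℝ → E} (hφ : ∀ x, φ (-x) = φ x) (t : ℝ) :
    ∫ z in Iic (t / 2), φ (z - t) = ∫ z in Ioi (t / 2), φ z := by
  rw [setIntegral_Iic_comp_sub_right, show t / 2 - t = -(t / 2) by ring, ← integral_comp_neg_Ioi]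
  simp only [hφ]

end Translation

lemma integral_le_two_mul_setIntegral_Ioi {f φ : ℝ → ℝ} (t : ℝ) (hf : Integrable f)
    (hφ : Integrable φ) (hφ_even : ∀ x, φ (-x) = φ x) (hf_le : ∀ z, f z ≤ φ z)
    (hf_le_shift : ∀ z, f z ≤ φ (z - t)) :
    ∫ z, f z ≤ 2 * ∫ z in Ioi (t / 2), φ z := by
  have h_left : ∫ z in Iic (t / 2), f z ≤ ∫ z in Ioi (t / 2), φ z := by
    rw [← setIntegral_Iic_comp_sub_eq_setIntegral_Ioi hφ_even]
    exact setIntegral_mono hf.integrableOn (hφ.comp_sub_right t).integrableOn hf_le_shift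
  have h_right : ∫ z in Ioi (t / 2), f z ≤ ∫ z in Ioi (t / 2), φ z :=
    setIntegral_mono hf.integrableOn hφ.integrableOn hf_le
  rw [← integral_add_compl measurableSet_Iic hf, compl_Iic, two_mul]
  exact add_le_add h_left h_right

lemma eta_eq_integral (t : ℝ) :
    eta t = ∫ z, gaussianPDFReal 0 1 z * sigmoid (t * z - t ^ 2 / 2) := by
  rw [eta, integral_gaussianReal_eq_integral_smul one_ne_zero]
  simp only [smul_eq_mul, sigmoid_def, neg_sub]

lemma eta_le_two_mul_setIntegral_Ioi (t : ℝ) :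
    eta t ≤ 2 * ∫ z in Ioi (t / 2), gaussianPDFReal 0 1 z := by
  rw [eta_eq_integral]
  refine integral_le_two_mul_setIntegral_Ioi t ?_ (integrable_gaussianPDFReal 0 1)
    (gaussianPDFReal_zero_neg 1) (fun z ↦ ?_) (fun z ↦ ?_)
  · refine (integrable_gaussianPDFReal 0 1).mul_bdd (c := 1) (by fun_prop) (ae_of_all _ fun z ↦ ?_)
    rw [norm_of_nonneg (sigmoid_nonneg _)]
    exact sigmoid_le_one _
  · exact mul_le_of_le_one_right (gaussianPDFReal_nonneg 0 1 z) (sigmoid_le_one _)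
  · calc gaussianPDFReal 0 1 z * sigmoid (t * z - t ^ 2 / 2)
        ≤ gaussianPDFReal 0 1 z * exp (t * (z - 0) - (1 : NNReal) * t ^ 2 / 2) := by
          gcongr
          · exact gaussianPDFReal_nonneg 0 1 z
          · simpa using sigmoid_le_exp _
      _ = gaussianPDFReal 0 1 (z - t) := by
          rw [gaussianPDFReal_mul_exp 0 one_ne_zero, gaussianPDFReal_sub]
          simp

theorem eta_le_gaussian_tail_general (t : ℝ) :
    eta t ≤ Real.sqrt (2 / π) * ∫ z in Set.Ioi (t / 2), Real.exp (-z ^ 2 / 2) := by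
  have h_pdf : ∫ z in Ioi (t / 2), gaussianPDFReal 0 1 z =
      (√(2 * π))⁻¹ * ∫ z in Ioi (t / 2), exp (-z ^ 2 / 2) := by
    simp [gaussianPDFReal, integral_const_mul]
  have h_const : √(2 / π) = 2 * (√(2 * π))⁻¹ := by
    rw [sqrt_div zero_le_two, sqrt_mul zero_le_two]
    have h_two : √2 * √2 = 2 := mul_self_sqrt zero_le_two
    have h_pi : 0 < √π := sqrt_pos.2 pi_pos
    field_simp
    linarith
  calc eta t ≤ 2 * ∫ z in Ioi (t / 2), gaussianPDFReal 0 1 z := eta_le_two_mul_setIntegral_Ioi t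
    _ = √(2 / π) * ∫ z in Ioi (t / 2), exp (-z ^ 2 / 2) := by rw [h_pdf, h_const]; ring

/-- For every `t > 0`, `η(t) ≤ √(2/π) ∫_{t/2}^∞ exp(−z²/2) dz`. -/
theorem eta_le_gaussian_tail (t : ℝ) (ht : 0 < t) :
    eta t ≤ Real.sqrt (2 / π) * ∫ z in Set.Ioi (t / 2), Real.exp (-z ^ 2 / 2) :=
  eta_le_gaussian_tail_general t
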